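/- arXiv:2009.07991 — 2 statements merged into one kernel-verified Lean document; each statement's English description precedes it below -/
import Mathlib

section
/- Parallel composition of typable g-choreographies with disjoint participants is defined: if Π1 ⊢ G1 : ⟨φ1,Λ1⟩ and Π2 ⊢ G2 : ⟨φ2,Λ2⟩ are derivable for ground g-choreographies G1, G2 and Π1 ∩ Π2 = ∅, then the label sets of ⟦G1⟧ and ⟦G2⟧ are disjoint, so ⟦G1|G2⟧ = ⟦G1⟧⊗⟦G2⟧ ≠ ⊥; moreover, for every participant A, the labels of the minimal events of ⟦G1|G2⟧↾A equal (φ1∪φ2)̂(A) and the labels of the maximal events of ⟦G1|G2⟧↾A equal (Λ1∪Λ2)̂(A). -/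
open scoped Classical

namespace Choreo

/-! ## Labels -/

/-- Communication labels: output `A B!m` and input `A B?m`. -/
inductive Label (P M : Type) where
  | out : P → P → M → Label P M
  | inp : P → P → M → Label P M

variable {P M : Type}

/-- The subject of a label: the sender of an output, the receiver of an input. -/
def Label.sbj : Label P M → P
  | .out a _ _ => a
  | .inp _ b _ => b

/-- The set `L^!` of output labels (sender and receiver distinct). -/
def Lout : Set (Label P M) := {l | ∃ a b m, a ≠ b ∧ l = .out a b m}

/-- The set `L^?` of input labels (sender and receiver distinct). -/
def Lin : Set (Label P M) := {l | ∃ a b m, a ≠ b ∧ l = .inp a b m}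

/-- `L̂(A)`: the labels in `L` whose subject is `A`. -/
def hat (L : Set (Label P M)) (A : P) : Set (Label P M) := {l ∈ L | l.sbj = A}

/-- `sbj(L)`: the set of subjects of the labels in `L`. -/
def sbjSet (L : Set (Label P M)) : Set P := Label.sbj '' L

/-- `L − Π`: the labels in `L` whose subject is not in `Π`. -/
def lminus (L : Set (Label P M)) (Γ : Set P) : Set (Label P M) := {l ∈ L | l.sbj ∉ Γ}

/-! ## Labelled event structures (events drawn from ℕ) -/

/-- Data of a labelled (prime) event structure over events drawn from `ℕ`. -/
structure ES (P M : Type) where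
  ev : Set ℕ
  le : ℕ → ℕ → Prop
  conf : ℕ → ℕ → Prop
  lbl : ℕ → Label P M

namespace ES

variable (E : ES P M)

/-- Configurations: downward-closed conflict-free sets of events. -/
def Config (x : Set ℕ) : Prop :=
  x ⊆ E.ev ∧ (∀ e ∈ x, ∀ f ∈ E.ev, E.le f e → f ∈ x) ∧
    ∀ e ∈ x, ∀ f ∈ x, ¬ E.conf e f

/-- `MaxC E`: the ⊆-maximal configurations of `E`. -/
def MaxC : Set (Set ℕ) := {x | E.Config x ∧ ∀ y, E.Config y → x ⊆ y → y = x}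

/-- Minimal events of `s ⊆ E.ev` with respect to `E.le`. -/
def minIn (s : Set ℕ) : Set ℕ := {e ∈ s | ∀ f ∈ s, E.le f e → f = e}

/-- Maximal events of `s ⊆ E.ev` with respect to `E.le`. -/
def maxIn (s : Set ℕ) : Set ℕ := {e ∈ s | ∀ f ∈ s, E.le e f → f = e}

def minEv : Set ℕ := E.minIn E.ev
def maxEv : Set ℕ := E.maxIn E.ev

/-- Labels of the minimal events of `E`. -/
def minLbl : Set (Label P M) := E.lbl '' E.minEv

/-- Labels of the maximal events of `E`. -/
def maxLbl : Set (Label P M) := E.lbl '' E.maxEv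

/-- All labels occurring in `E`. -/
def lblSet : Set (Label P M) := E.lbl '' E.ev

/-- The projection `E↾A`: the restriction of `E` to the events whose label has subject `A`. -/
def proj (A : P) : ES P M where
  ev := {e ∈ E.ev | (E.lbl e).sbj = A}
  le u v := E.le u v ∧ (u ∈ E.ev ∧ (E.lbl u).sbj = A) ∧ (v ∈ E.ev ∧ (E.lbl v).sbj = A)
  conf u v := E.conf u v ∧ (u ∈ E.ev ∧ (E.lbl u).sbj = A) ∧ (v ∈ E.ev ∧ (E.lbl v).sbj = A)
  lbl := E.lbl

/-- The projection `x↾A` of a configuration (as a set of events of `E`). -/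
def projC (x : Set ℕ) (A : P) : Set ℕ := {e ∈ x | (E.lbl e).sbj = A}

end ES

/-! ## Constructions on event structures -/

/-- Tag for the events of a left component. -/
def tagL (e : ℕ) : ℕ := Nat.pair 0 e
/-- Tag for the events of a right component. -/
def tagR (e : ℕ) : ℕ := Nat.pair 1 e
/-- Tag for the events of the copy of the second component indexed by (the code of) a
maximal configuration of the first one. -/
def tagC (k e : ℕ) : ℕ := Nat.pair 1 (Nat.pair k e)

/-- A code (injective on finite sets) of sets of naturals. -/
noncomputable def encSet (x : Set ℕ) : ℕ :=
  if h : x.Finite then h.toFinset.sum (fun n => 2 ^ n) else 0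

/-- The empty event structure `ε`. -/
noncomputable def esEmpty [Nonempty P] [Nonempty M] : ES P M where
  ev := ∅
  le _ _ := False
  conf _ _ := False
  lbl _ := Label.out Classical.ofNonempty Classical.ofNonempty Classical.ofNonempty

/-- `⟦A→B:m⟧`: two ordered events labelled `A B!m < A B?m`. -/
def esAct (a b : P) (m : M) : ES P M where
  ev := {0, 1}
  le u v := (u = 0 ∧ v = 0) ∨ (u = 0 ∧ v = 1) ∨ (u = 1 ∧ v = 1)
  conf _ _ := False
  lbl e := if e = 0 then Label.out a b m else Label.inp a b m

/-- Tensor product `E1 ⊗ E2` (componentwise disjoint union). -/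
def esTensor (E1 E2 : ES P M) : ES P M where
  ev := (tagL '' E1.ev) ∪ (tagR '' E2.ev)
  le u v := (∃ e ∈ E1.ev, ∃ f ∈ E1.ev, E1.le e f ∧ u = tagL e ∧ v = tagL f) ∨
            (∃ e ∈ E2.ev, ∃ f ∈ E2.ev, E2.le e f ∧ u = tagR e ∧ v = tagR f)
  conf u v := (∃ e ∈ E1.ev, ∃ f ∈ E1.ev, E1.conf e f ∧ u = tagL e ∧ v = tagL f) ∨
              (∃ e ∈ E2.ev, ∃ f ∈ E2.ev, E2.conf e f ∧ u = tagR e ∧ v = tagR f)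
  lbl u := if (Nat.unpair u).1 = 0 then E1.lbl (Nat.unpair u).2 else E2.lbl (Nat.unpair u).2

/-- Sum `E1 + E2`: disjoint union with all cross pairs of events in conflict. -/
def esSum (E1 E2 : ES P M) : ES P M :=
  { esTensor E1 E2 with
    conf := fun u v => (esTensor E1 E2).conf u v ∨
      (∃ e ∈ E1.ev, ∃ f ∈ E2.ev, (u = tagL e ∧ v = tagR f) ∨ (u = tagR f ∧ v = tagL e)) }

/-- Sequential composition: appends to each maximal configuration `x` of `E1` a disjoint
copy of `E2`, ordering an event of `x` below an event of the copy whenever their labels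
have the same subject. -/
noncomputable def esSeq (E1 E2 : ES P M) : ES P M where
  ev := (tagL '' E1.ev) ∪ {u | ∃ x ∈ E1.MaxC, ∃ e ∈ E2.ev, u = tagC (encSet x) e}
  le u v :=
    (∃ e ∈ E1.ev, ∃ f ∈ E1.ev, E1.le e f ∧ u = tagL e ∧ v = tagL f) ∨
    (∃ x ∈ E1.MaxC, ∃ e ∈ E2.ev, ∃ f ∈ E2.ev, E2.le e f ∧
       u = tagC (encSet x) e ∧ v = tagC (encSet x) f) ∨
    (∃ x ∈ E1.MaxC, ∃ e ∈ x, ∃ f ∈ E2.ev, (E1.lbl e).sbj = (E2.lbl f).sbj ∧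
       u = tagL e ∧ v = tagC (encSet x) f)
  conf u v :=
    (∃ e ∈ E1.ev, ∃ f ∈ E1.ev, E1.conf e f ∧ u = tagL e ∧ v = tagL f) ∨
    (∃ x ∈ E1.MaxC, ∃ e ∈ E2.ev, ∃ f ∈ E2.ev, E2.conf e f ∧
       u = tagC (encSet x) e ∧ v = tagC (encSet x) f) ∨
    (∃ x ∈ E1.MaxC, ∃ x' ∈ E1.MaxC, x ≠ x' ∧ ∃ e ∈ E2.ev, ∃ f ∈ E2.ev,
       u = tagC (encSet x) e ∧ v = tagC (encSet x') f) ∨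
    (∃ x ∈ E1.MaxC, ∃ e ∈ E1.ev, (∃ e' ∈ x, E1.conf e e') ∧ ∃ f ∈ E2.ev,
       ((u = tagL e ∧ v = tagC (encSet x) f) ∨ (u = tagC (encSet x) f ∧ v = tagL e)))
  lbl u := if (Nat.unpair u).1 = 0 then E1.lbl (Nat.unpair u).2
           else E2.lbl (Nat.unpair (Nat.unpair u).2).2

/-! ## Well-branchedness -/

/-- Labels of the minimal events of the projection `E↾A`. -/
def minLblP (E : ES P M) (A : P) : Set (Label P M) := (E.proj A).minLbl

/-- `A` is active for the branches `E1`, `E2`. -/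
def active (E1 E2 : ES P M) (A : P) : Prop :=
  minLblP E1 A ≠ ∅ ∧ minLblP E2 A ≠ ∅ ∧
  Disjoint (minLblP E1 A) (minLblP E2 A) ∧
  minLblP E1 A ∪ minLblP E2 A ⊆ Lout

/-- `B` is passive for the branches `E1`, `E2`. -/
def passive (E1 E2 : ES P M) (B : P) : Prop :=
  Disjoint (minLblP E1 B) (minLblP E2 B) ∧
  minLblP E1 B ∪ minLblP E2 B ⊆ Lin ∧
  (minLblP E1 B = ∅ ↔ minLblP E2 B = ∅)

/-- Well-branchedness: a unique active participant, all other participants passive. -/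
def wb (E1 E2 : ES P M) : Prop :=
  ∃ A, active E1 E2 A ∧ (∀ A', active E1 E2 A' → A' = A) ∧
    ∀ B, B ≠ A → passive E1 E2 B

/-! ## Ground g-choreographies and their semantics -/

/-- Ground g-choreographies: `G ::= 0 | A→B:m | G;G | G|G | G+G`. -/
inductive GC (P M : Type) where
  | nil : GC P M
  | act : P → P → M → GC P M
  | seq : GC P M → GC P M → GC P M
  | par : GC P M → GC P M → GC P M
  | cho : GC P M → GC P M → GC P M

/-- `P(G)`: the participants occurring in `G`. -/
def parts : GC P M → Set P
  | .nil => ∅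
  | .act a b _ => {a, b}
  | .seq g1 g2 => parts g1 ∪ parts g2
  | .par g1 g2 => parts g1 ∪ parts g2
  | .cho g1 g2 => parts g1 ∪ parts g2

/-- The semantics `⟦G⟧`: a labelled event structure, or `none` (i.e. `⊥`) when a side
condition fails (the grammar requires `A ≠ B` in interactions; parallel requires disjoint
label sets; choice requires well-branchedness). -/
noncomputable def gsem [Nonempty P] [Nonempty M] : GC P M → Option (ES P M)
  | .nil => some esEmpty
  | .act a b m => if a = b then none else some (esAct a b m)
  | .seq g1 g2 =>
      match gsem g1, gsem g2 with
      | some E1, some E2 => some (esSeq E1 E2)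
      | _, _ => none
  | .par g1 g2 =>
      match gsem g1, gsem g2 with
      | some E1, some E2 =>
          if Disjoint E1.lblSet E2.lblSet then some (esTensor E1 E2) else none
      | _, _ => none
  | .cho g1 g2 =>
      match gsem g1, gsem g2 with
      | some E1, some E2 => if wb E1 E2 then some (esSum E1 E2) else none
      | _, _ => none

/-! ## The typing system -/

/-- Output uniform sets of labels. -/
def outUniform (U V : Set (Label P M)) : Prop := Disjoint U V ∧ U ∪ V ⊆ Lout

/-- Input uniform sets of labels. -/
def inUniform (U V : Set (Label P M)) : Prop := Disjoint U V ∧ U ∪ V ⊆ Lin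

/-- The compatibility condition `compch(φ1,φ2,Π)` of rule t-ch. -/
def compch (φ1 φ2 : Set (Label P M)) (Γ : Set P) : Prop :=
  ∃ A ∈ Γ,
    (outUniform (hat φ1 A) (hat φ2 A) ∧ hat φ1 A ≠ ∅ ∧ hat φ2 A ≠ ∅) ∧
    (∀ A' ∈ Γ, (outUniform (hat φ1 A') (hat φ2 A') ∧ hat φ1 A' ≠ ∅ ∧ hat φ2 A' ≠ ∅) →
        A' = A) ∧
    ∀ B ∈ Γ, B ≠ A →
      inUniform (hat φ1 B) (hat φ2 B) ∧ (hat φ1 B = ∅ ↔ hat φ2 B = ∅)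

/-- The typing judgement `Π ⊢ G : ⟨φ,Λ⟩`. -/
inductive Typing : Set P → GC P M → Set (Label P M) → Set (Label P M) → Prop where
  | temp : Typing ∅ GC.nil ∅ ∅
  | tint {a b : P} {m : M} (hab : a ≠ b) :
      Typing {a, b} (GC.act a b m)
        {Label.out a b m, Label.inp a b m} {Label.out a b m, Label.inp a b m}
  | tseq {Γ1 Γ2 : Set P} {g1 g2 : GC P M} {φ1 φ2 Λ1 Λ2 : Set (Label P M)} :
      Typing Γ1 g1 φ1 Λ1 → Typing Γ2 g2 φ2 Λ2 →
      Typing (Γ1 ∪ Γ2) (GC.seq g1 g2) (φ1 ∪ lminus φ2 Γ1) (Λ2 ∪ lminus Λ1 Γ2)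
  | tpar {Γ1 Γ2 : Set P} {g1 g2 : GC P M} {φ1 φ2 Λ1 Λ2 : Set (Label P M)} :
      Typing Γ1 g1 φ1 Λ1 → Typing Γ2 g2 φ2 Λ2 → Γ1 ∩ Γ2 = ∅ →
      Typing (Γ1 ∪ Γ2) (GC.par g1 g2) (φ1 ∪ φ2) (Λ1 ∪ Λ2)
  | tch {Γ : Set P} {g1 g2 : GC P M} {φ1 φ2 Λ1 Λ2 : Set (Label P M)} :
      Typing Γ g1 φ1 Λ1 → Typing Γ g2 φ2 Λ2 → compch φ1 φ2 Γ →
      Typing Γ (GC.cho g1 g2) (φ1 ∪ φ2) (Λ1 ∪ Λ2)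


/-! ## One-hole contexts and their typing (hole axiom `Γh ⊢ [·] : ⟨φh,Λh⟩`) -/

/-- g-choreography contexts with a single hole. -/
inductive Ctx (P M : Type) where
  | hole : Ctx P M
  | seqL : Ctx P M → GC P M → Ctx P M
  | seqR : GC P M → Ctx P M → Ctx P M
  | parL : Ctx P M → GC P M → Ctx P M
  | parR : GC P M → Ctx P M → Ctx P M
  | choL : Ctx P M → GC P M → Ctx P M
  | choR : GC P M → Ctx P M → Ctx P M

/-- `C.fill g = C[g]`, the replacement of the hole of `C` by `g`. -/
def Ctx.fill : Ctx P M → GC P M → GC P M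
  | .hole, g => g
  | .seqL c g2, g => GC.seq (c.fill g) g2
  | .seqR g1 c, g => GC.seq g1 (c.fill g)
  | .parL c g2, g => GC.par (c.fill g) g2
  | .parR g1 c, g => GC.par g1 (c.fill g)
  | .choL c g2, g => GC.cho (c.fill g) g2
  | .choR g1 c, g => GC.cho g1 (c.fill g)

/-- Typing of one-hole contexts in the type system extended with the axiom
`Γh ⊢ [·] : ⟨φh,Λh⟩` for the hole. -/
inductive CTyping (Γh : Set P) (φh Λh : Set (Label P M)) :
    Set P → Ctx P M → Set (Label P M) → Set (Label P M) → Prop where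
  | hole : CTyping Γh φh Λh Γh Ctx.hole φh Λh
  | seqL {Γ1 Γ2 : Set P} {c : Ctx P M} {g : GC P M} {φ1 φ2 Λ1 Λ2 : Set (Label P M)} :
      CTyping Γh φh Λh Γ1 c φ1 Λ1 → Typing Γ2 g φ2 Λ2 →
      CTyping Γh φh Λh (Γ1 ∪ Γ2) (Ctx.seqL c g) (φ1 ∪ lminus φ2 Γ1) (Λ2 ∪ lminus Λ1 Γ2)
  | seqR {Γ1 Γ2 : Set P} {g : GC P M} {c : Ctx P M} {φ1 φ2 Λ1 Λ2 : Set (Label P M)} :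
      Typing Γ1 g φ1 Λ1 → CTyping Γh φh Λh Γ2 c φ2 Λ2 →
      CTyping Γh φh Λh (Γ1 ∪ Γ2) (Ctx.seqR g c) (φ1 ∪ lminus φ2 Γ1) (Λ2 ∪ lminus Λ1 Γ2)
  | parL {Γ1 Γ2 : Set P} {c : Ctx P M} {g : GC P M} {φ1 φ2 Λ1 Λ2 : Set (Label P M)} :
      CTyping Γh φh Λh Γ1 c φ1 Λ1 → Typing Γ2 g φ2 Λ2 → Γ1 ∩ Γ2 = ∅ →
      CTyping Γh φh Λh (Γ1 ∪ Γ2) (Ctx.parL c g) (φ1 ∪ φ2) (Λ1 ∪ Λ2)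
  | parR {Γ1 Γ2 : Set P} {g : GC P M} {c : Ctx P M} {φ1 φ2 Λ1 Λ2 : Set (Label P M)} :
      Typing Γ1 g φ1 Λ1 → CTyping Γh φh Λh Γ2 c φ2 Λ2 → Γ1 ∩ Γ2 = ∅ →
      CTyping Γh φh Λh (Γ1 ∪ Γ2) (Ctx.parR g c) (φ1 ∪ φ2) (Λ1 ∪ Λ2)
  | choL {Γ : Set P} {c : Ctx P M} {g : GC P M} {φ1 φ2 Λ1 Λ2 : Set (Label P M)} :
      CTyping Γh φh Λh Γ c φ1 Λ1 → Typing Γ g φ2 Λ2 → compch φ1 φ2 Γ →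
      CTyping Γh φh Λh Γ (Ctx.choL c g) (φ1 ∪ φ2) (Λ1 ∪ Λ2)
  | choR {Γ : Set P} {g : GC P M} {c : Ctx P M} {φ1 φ2 Λ1 Λ2 : Set (Label P M)} :
      Typing Γ g φ1 Λ1 → CTyping Γh φh Λh Γ c φ2 Λ2 → compch φ1 φ2 Γ →
      CTyping Γh φh Λh Γ (Ctx.choR g c) (φ1 ∪ φ2) (Λ1 ∪ Λ2)

/-! ## Refinable actions, t-ref, and refinement -/

/-- The three side conditions of the axiom schema t-ref for the refinable action
`A → m1…mn : B1,…,Bn`, represented by the initiator `A` and the nonempty list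
`l = [(m1,B1),…,(mn,Bn)]` with pairwise distinct `Bi`. -/
def trefCond (Γ : Set P) (φ Λ : Set (Label P M)) (A : P) (l : List (M × P)) : Prop :=
  l ≠ [] ∧ (l.map Prod.snd).Nodup ∧
  sbjSet φ = Γ ∧ sbjSet Λ = Γ ∧ sbjSet (φ ∩ Lout) = {A} ∧
  ∀ p ∈ l, ∃ C ∈ Γ, hat Λ p.2 = {Label.inp C p.2 p.1}

/-- `G ref A→m1…mn:B1,…,Bn`: the ground g-choreography `G` refines the refinable action
given by initiator `A` and list `l = [(m1,B1),…,(mn,Bn)]`. -/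
def Refines [Nonempty P] [Nonempty M] (G : GC P M) (A : P) (l : List (M × P)) : Prop :=
  ∃ E : ES P M, gsem G = some E ∧
    sbjSet E.minLbl = {A} ∧
    ∀ x ∈ E.MaxC, ∀ p ∈ l, ∃ C ∈ parts G,
      Label.inp C p.2 p.1 ∈ E.lbl '' (E.maxIn (E.projC x p.2))

/-! ## Multi-hole contexts -/

/-- g-choreography contexts with (numbered) holes. -/
inductive MCtx (P M : Type) where
  | hole : ℕ → MCtx P M
  | nil : MCtx P M
  | act : P → P → M → MCtx P M
  | seq : MCtx P M → MCtx P M → MCtx P M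
  | par : MCtx P M → MCtx P M → MCtx P M
  | cho : MCtx P M → MCtx P M → MCtx P M

/-- The (indices of the) holes occurring in a multi-hole context. -/
def MCtx.holes : MCtx P M → List ℕ
  | .hole i => [i]
  | .nil => []
  | .act _ _ _ => []
  | .seq c1 c2 => c1.holes ++ c2.holes
  | .par c1 c2 => c1.holes ++ c2.holes
  | .cho c1 c2 => c1.holes ++ c2.holes

/-- `C.fill g`: replace each hole `[·]i` by `g i`. -/
def MCtx.fill : MCtx P M → (ℕ → GC P M) → GC P M
  | .hole i, g => g i
  | .nil, _ => GC.nil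
  | .act a b m, _ => GC.act a b m
  | .seq c1 c2, g => GC.seq (c1.fill g) (c2.fill g)
  | .par c1 c2, g => GC.par (c1.fill g) (c2.fill g)
  | .cho c1 c2, g => GC.cho (c1.fill g) (c2.fill g)

/-- Typing of multi-hole contexts in the extended type system, where hole `i` is typed by
the axiom `(σ i).1 ⊢ [·]i : ⟨(σ i).2.1, (σ i).2.2⟩`. -/
inductive MTyping (σ : ℕ → Set P × Set (Label P M) × Set (Label P M)) :
    Set P → MCtx P M → Set (Label P M) → Set (Label P M) → Prop where
  | hole (i : ℕ) : MTyping σ (σ i).1 (MCtx.hole i) (σ i).2.1 (σ i).2.2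
  | temp : MTyping σ ∅ MCtx.nil ∅ ∅
  | tint {a b : P} {m : M} (hab : a ≠ b) :
      MTyping σ {a, b} (MCtx.act a b m)
        {Label.out a b m, Label.inp a b m} {Label.out a b m, Label.inp a b m}
  | tseq {Γ1 Γ2 : Set P} {c1 c2 : MCtx P M} {φ1 φ2 Λ1 Λ2 : Set (Label P M)} :
      MTyping σ Γ1 c1 φ1 Λ1 → MTyping σ Γ2 c2 φ2 Λ2 →
      MTyping σ (Γ1 ∪ Γ2) (MCtx.seq c1 c2) (φ1 ∪ lminus φ2 Γ1) (Λ2 ∪ lminus Λ1 Γ2)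
  | tpar {Γ1 Γ2 : Set P} {c1 c2 : MCtx P M} {φ1 φ2 Λ1 Λ2 : Set (Label P M)} :
      MTyping σ Γ1 c1 φ1 Λ1 → MTyping σ Γ2 c2 φ2 Λ2 → Γ1 ∩ Γ2 = ∅ →
      MTyping σ (Γ1 ∪ Γ2) (MCtx.par c1 c2) (φ1 ∪ φ2) (Λ1 ∪ Λ2)
  | tch {Γ : Set P} {c1 c2 : MCtx P M} {φ1 φ2 Λ1 Λ2 : Set (Label P M)} :
      MTyping σ Γ c1 φ1 Λ1 → MTyping σ Γ c2 φ2 Λ2 → compch φ1 φ2 Γ →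
      MTyping σ Γ (MCtx.cho c1 c2) (φ1 ∪ φ2) (Λ1 ∪ Λ2)

/-!
Induction on the typing derivation `Γ ⊢ G : ⟨φ, Λ⟩`, with the invariant `Realizes Γ φ Λ ⟦G⟧`:
`⟦G⟧` is finite, its events have subjects in `Γ`, and the minimal (maximal) labels of `⟦G⟧↾A`
are `φ̂(A)` (`Λ̂(A)`). Disjoint participants then give disjoint label sets, so `⟦G1|G2⟧` is
defined, and the tensor product just unites the minimal and maximal events of its components.

The invariant also records that every maximal configuration meets every participant of `Γ` and
that every event lies in a maximal configuration; this is what sequential composition needs. In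
`⟦G1;G2⟧` an event of a copy of `⟦G2⟧` with subject `A ∈ Γ1` sits above an `A`-event of the
maximal configuration it extends, so only `φ2 − Γ1` contributes new minimal labels; dually, only
`Λ1 − Γ2` contributes maximal ones. For choice, `compch` is well-branchedness read through the
invariant.
-/

lemma tagL_injective : Function.Injective tagL := fun _ _ h => by
  simpa [tagL, Nat.pair_eq_pair] using h

lemma tagR_injective : Function.Injective tagR := fun _ _ h => by
  simpa [tagR, Nat.pair_eq_pair] using h

@[simp] lemma tagC_inj {k k' e e' : ℕ} : tagC k e = tagC k' e' ↔ k = k' ∧ e = e' := by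
  simp [tagC, Nat.pair_eq_pair]

@[simp] lemma tagL_inj {e f : ℕ} : tagL e = tagL f ↔ e = f := tagL_injective.eq_iff
@[simp] lemma tagR_inj {e f : ℕ} : tagR e = tagR f ↔ e = f := tagR_injective.eq_iff

@[simp] lemma tagL_ne_tagR (e f : ℕ) : tagL e ≠ tagR f := by
  simp [tagL, tagR, Nat.pair_eq_pair]

@[simp] lemma tagR_ne_tagL (e f : ℕ) : tagR f ≠ tagL e := (tagL_ne_tagR e f).symm

@[simp] lemma tagL_ne_tagC (e k f : ℕ) : tagL e ≠ tagC k f := by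
  simp [tagL, tagC, Nat.pair_eq_pair]

@[simp] lemma tagC_ne_tagL (e k f : ℕ) : tagC k f ≠ tagL e := (tagL_ne_tagC e k f).symm

lemma encSet_injOn : Set.InjOn encSet {x : Set ℕ | x.Finite} := by
  intro x (hx : x.Finite) y (hy : y.Finite) h
  rw [encSet, encSet, dif_pos hx, dif_pos hy] at h
  rw [← hx.coe_toFinset, ← hy.coe_toFinset, Finset.geomSum_injective le_rfl h]

@[simp] lemma esTensor_lbl_tagL (E1 E2 : ES P M) (e : ℕ) :
    (esTensor E1 E2).lbl (tagL e) = E1.lbl e := by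
  simp [esTensor, tagL]

@[simp] lemma esTensor_lbl_tagR (E1 E2 : ES P M) (e : ℕ) :
    (esTensor E1 E2).lbl (tagR e) = E2.lbl e := by
  simp [esTensor, tagR]

@[simp] lemma esSeq_lbl_tagL (E1 E2 : ES P M) (e : ℕ) :
    (esSeq E1 E2).lbl (tagL e) = E1.lbl e := by
  simp [esSeq, tagL]

@[simp] lemma esSeq_lbl_tagC (E1 E2 : ES P M) (k e : ℕ) :
    (esSeq E1 E2).lbl (tagC k e) = E2.lbl e := by
  simp [esSeq, tagC]

lemma hat_union (φ1 φ2 : Set (Label P M)) (A : P) :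
    hat (φ1 ∪ φ2) A = hat φ1 A ∪ hat φ2 A :=
  Set.sep_union

lemma hat_lminus (φ : Set (Label P M)) (Γ : Set P) (A : P) :
    hat (lminus φ Γ) A = lminus (hat φ A) Γ := by
  ext l
  simp only [hat, lminus, Set.mem_ofPred_eq]
  tauto

namespace ES

variable {E E' : ES P M}

lemma mem_proj_minEv {A : P} {u : ℕ} :
    u ∈ (E.proj A).minEv ↔ u ∈ E.ev ∧ (E.lbl u).sbj = A ∧
      ∀ v ∈ E.ev, (E.lbl v).sbj = A → E.le v u → v = u := by
  simp only [minEv, minIn, proj, Set.mem_ofPred_eq]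
  exact ⟨fun ⟨⟨hu, hs⟩, h⟩ => ⟨hu, hs, fun v hv hvs hle => h v ⟨hv, hvs⟩ ⟨hle, ⟨hv, hvs⟩, hu, hs⟩⟩,
    fun ⟨hu, hs, h⟩ => ⟨⟨hu, hs⟩, fun v hv hle => h v hv.1 hv.2 hle.1⟩⟩

lemma mem_proj_maxEv {A : P} {u : ℕ} :
    u ∈ (E.proj A).maxEv ↔ u ∈ E.ev ∧ (E.lbl u).sbj = A ∧
      ∀ v ∈ E.ev, (E.lbl v).sbj = A → E.le u v → v = u := by
  simp only [maxEv, maxIn, proj, Set.mem_ofPred_eq]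
  exact ⟨fun ⟨⟨hu, hs⟩, h⟩ => ⟨hu, hs, fun v hv hvs hle => h v ⟨hv, hvs⟩ ⟨hle, ⟨hu, hs⟩, hv, hvs⟩⟩,
    fun ⟨hu, hs, h⟩ => ⟨⟨hu, hs⟩, fun v hv hle => h v hv.1 hv.2 hle.1⟩⟩

lemma minEv_proj_eq_ev (h : Set.InjOn (fun e => (E.lbl e).sbj) E.ev) (A : P) :
    (E.proj A).minEv = (E.proj A).ev :=
  Set.Subset.antisymm (fun _ hu => hu.1) fun _ ⟨hu, hs⟩ =>
    mem_proj_minEv.2 ⟨hu, hs, fun _ hv hvs _ => h hv hu (hvs.trans hs.symm)⟩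

lemma maxEv_proj_eq_ev (h : Set.InjOn (fun e => (E.lbl e).sbj) E.ev) (A : P) :
    (E.proj A).maxEv = (E.proj A).ev :=
  Set.Subset.antisymm (fun _ hu => hu.1) fun _ ⟨hu, hs⟩ =>
    mem_proj_maxEv.2 ⟨hu, hs, fun _ hv hvs _ => h hv hu (hvs.trans hs.symm)⟩

lemma lblSet_proj (A : P) : (E.proj A).lblSet = hat E.lblSet A := by
  ext l
  simp only [lblSet, proj, hat, Set.mem_image, Set.mem_ofPred_eq]
  constructor
  · rintro ⟨u, ⟨hu, rfl⟩, rfl⟩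
    exact ⟨⟨u, hu, rfl⟩, rfl⟩
  · rintro ⟨⟨u, hu, rfl⟩, rfl⟩
    exact ⟨u, ⟨hu, rfl⟩, rfl⟩


lemma config_empty : E.Config ∅ :=
  ⟨Set.empty_subset _, fun _ h => h.elim, fun _ h => h.elim⟩

lemma Config.union {x y : Set ℕ} (hx : E.Config x) (hy : E.Config y)
    (hxy : ∀ e ∈ x, ∀ f ∈ y, ¬ E.conf e f ∧ ¬ E.conf f e) : E.Config (x ∪ y) := by
  refine ⟨Set.union_subset hx.1 hy.1, ?_, ?_⟩
  · rintro e (he | he) f hf hle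
    exacts [Or.inl (hx.2.1 e he f hf hle), Or.inr (hy.2.1 e he f hf hle)]
  · rintro e (he | he) f (hf | hf)
    exacts [hx.2.2 e he f hf, (hxy e he f hf).1, (hxy f hf e he).2, hy.2.2 e he f hf]

lemma maxC_finite (hfin : E.ev.Finite) : E.MaxC.Finite :=
  hfin.finite_subsets.subset fun _ hx => hx.1.1

lemma exists_maxC_superset (hfin : E.ev.Finite) {x : Set ℕ} (hx : E.Config x) :
    ∃ y ∈ E.MaxC, x ⊆ y := by
  have hT : {y | E.Config y ∧ x ⊆ y}.Finite :=
    hfin.finite_subsets.subset fun y hy => hy.1.1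
  obtain ⟨y, ⟨hy, hxy⟩, hmax⟩ := hT.exists_maximalFor id _ ⟨x, hx, subset_rfl⟩
  exact ⟨y, ⟨hy, fun z hz hyz => (hmax ⟨hz, hxy.trans hyz⟩ hyz).antisymm hyz⟩, hxy⟩

lemma maxC_nonempty (hfin : E.ev.Finite) : E.MaxC.Nonempty :=
  let ⟨y, hy, _⟩ := exists_maxC_superset hfin config_empty
  ⟨y, hy⟩

structure IsEmbedding (ι : ℕ → ℕ) (E' E : ES P M) : Prop where
  injective : Function.Injective ι
  mapsTo : Set.MapsTo ι E'.ev E.ev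
  lbl_apply : ∀ e, E.lbl (ι e) = E'.lbl e
  le_iff : ∀ e ∈ E'.ev, ∀ f ∈ E'.ev, E.le (ι e) (ι f) ↔ E'.le e f
  conf_iff : ∀ e ∈ E'.ev, ∀ f ∈ E'.ev, E.conf (ι e) (ι f) ↔ E'.conf e f

namespace IsEmbedding

variable {ι : ℕ → ℕ}

lemma config_preimage (h : IsEmbedding ι E' E) {z : Set ℕ} (hz : E.Config z) :
    E'.Config {e ∈ E'.ev | ι e ∈ z} := by
  refine ⟨fun e he => he.1, fun e ⟨he, hez⟩ f hf hle => ⟨hf, ?_⟩,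
    fun e ⟨he, hez⟩ f ⟨hf, hfz⟩ hc => hz.2.2 _ hez _ hfz ((h.conf_iff e he f hf).2 hc)⟩
  exact hz.2.1 _ hez _ (h.mapsTo hf) ((h.le_iff f hf e he).2 hle)

lemma config_image (h : IsEmbedding ι E' E)
    (hdown : ∀ e ∈ E'.ev, ∀ v ∈ E.ev, E.le v (ι e) → v ∈ ι '' E'.ev)
    {x : Set ℕ} (hx : E'.Config x) : E.Config (ι '' x) := by
  refine ⟨(Set.image_mono hx.1).trans h.mapsTo.image_subset, ?_, ?_⟩
  · rintro _ ⟨e, he, rfl⟩ v hv hle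
    obtain ⟨f, hf, rfl⟩ := hdown e (hx.1 he) v hv hle
    exact ⟨f, hx.2.1 e he f hf ((h.le_iff f hf e (hx.1 he)).1 hle), rfl⟩
  · rintro _ ⟨e, he, rfl⟩ _ ⟨f, hf, rfl⟩ hc
    exact hx.2.2 e he f hf ((h.conf_iff e (hx.1 he) f (hx.1 hf)).1 hc)

lemma mem_proj_minEv_iff (h : IsEmbedding ι E' E) {A : P} {e : ℕ} (he : e ∈ E'.ev)
    (hdown : ∀ v ∈ E.ev, (E.lbl v).sbj = A → E.le v (ι e) → v ∈ ι '' E'.ev) :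
    ι e ∈ (E.proj A).minEv ↔ e ∈ (E'.proj A).minEv := by
  simp only [mem_proj_minEv, h.lbl_apply]
  refine ⟨fun ⟨_, hs, hmin⟩ => ⟨he, hs, fun f hf hfs hle => h.injective ?_⟩,
    fun ⟨_, hs, hmin⟩ => ⟨h.mapsTo he, hs, fun v hv hvs hle => ?_⟩⟩
  · exact hmin _ (h.mapsTo hf) (by rwa [h.lbl_apply]) ((h.le_iff f hf e he).2 hle)
  · obtain ⟨f, hf, rfl⟩ := hdown v hv hvs hle
    rw [h.lbl_apply] at hvs
    rw [hmin f hf hvs ((h.le_iff f hf e he).1 hle)]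

lemma mem_proj_maxEv_iff (h : IsEmbedding ι E' E) {A : P} {e : ℕ} (he : e ∈ E'.ev)
    (hup : ∀ v ∈ E.ev, (E.lbl v).sbj = A → E.le (ι e) v → v ∈ ι '' E'.ev) :
    ι e ∈ (E.proj A).maxEv ↔ e ∈ (E'.proj A).maxEv := by
  simp only [mem_proj_maxEv, h.lbl_apply]
  refine ⟨fun ⟨_, hs, hmax⟩ => ⟨he, hs, fun f hf hfs hle => h.injective ?_⟩,
    fun ⟨_, hs, hmax⟩ => ⟨h.mapsTo he, hs, fun v hv hvs hle => ?_⟩⟩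
  · exact hmax _ (h.mapsTo hf) (by rwa [h.lbl_apply]) ((h.le_iff e he f hf).2 hle)
  · obtain ⟨f, hf, rfl⟩ := hup v hv hvs hle
    rw [h.lbl_apply] at hvs
    rw [hmax f hf hvs ((h.le_iff e he f hf).1 hle)]

end IsEmbedding

end ES

section Tensor

variable {E1 E2 : ES P M}

lemma tensor_lift_cases {R1 R2 : ℕ → ℕ → Prop} {u v : ℕ}
    (h : (∃ e ∈ E1.ev, ∃ f ∈ E1.ev, R1 e f ∧ u = tagL e ∧ v = tagL f) ∨
      (∃ e ∈ E2.ev, ∃ f ∈ E2.ev, R2 e f ∧ u = tagR e ∧ v = tagR f)) :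
    (u ∈ tagL '' E1.ev ∧ v ∈ tagL '' E1.ev) ∨ (u ∈ tagR '' E2.ev ∧ v ∈ tagR '' E2.ev) := by
  rcases h with ⟨e, he, f, hf, -, rfl, rfl⟩ | ⟨e, he, f, hf, -, rfl, rfl⟩
  exacts [Or.inl ⟨⟨e, he, rfl⟩, f, hf, rfl⟩, Or.inr ⟨⟨e, he, rfl⟩, f, hf, rfl⟩]

lemma tagL_notMem_image_tagR (e : ℕ) (s : Set ℕ) : tagL e ∉ tagR '' s := by
  rintro ⟨f, -, h⟩
  exact tagR_ne_tagL e f h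

lemma tagR_notMem_image_tagL (e : ℕ) (s : Set ℕ) : tagR e ∉ tagL '' s := by
  rintro ⟨f, -, h⟩
  exact tagL_ne_tagR f e h

lemma isEmbedding_tagL_esTensor : ES.IsEmbedding tagL E1 (esTensor E1 E2) where
  injective := tagL_injective
  mapsTo _ he := Or.inl ⟨_, he, rfl⟩
  lbl_apply := esTensor_lbl_tagL E1 E2
  le_iff e he f hf := by simp [esTensor, he, hf]
  conf_iff e he f hf := by simp [esTensor, he, hf]

lemma isEmbedding_tagR_esTensor : ES.IsEmbedding tagR E2 (esTensor E1 E2) where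
  injective := tagR_injective
  mapsTo _ he := Or.inr ⟨_, he, rfl⟩
  lbl_apply := esTensor_lbl_tagR E1 E2
  le_iff e he f hf := by simp [esTensor, he, hf]
  conf_iff e he f hf := by simp [esTensor, he, hf]

lemma esTensor_le_tagL {e v : ℕ} (h : (esTensor E1 E2).le v (tagL e)) : v ∈ tagL '' E1.ev := by
  rcases tensor_lift_cases h with ⟨hv, -⟩ | ⟨-, he⟩
  exacts [hv, (tagL_notMem_image_tagR e _ he).elim]

lemma esTensor_le_tagR {e v : ℕ} (h : (esTensor E1 E2).le v (tagR e)) : v ∈ tagR '' E2.ev := by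
  rcases tensor_lift_cases h with ⟨-, he⟩ | ⟨hv, -⟩
  exacts [(tagR_notMem_image_tagL e _ he).elim, hv]

lemma esTensor_tagL_le {e v : ℕ} (h : (esTensor E1 E2).le (tagL e) v) : v ∈ tagL '' E1.ev := by
  rcases tensor_lift_cases h with ⟨-, hv⟩ | ⟨he, -⟩
  exacts [hv, (tagL_notMem_image_tagR e _ he).elim]

lemma esTensor_tagR_le {e v : ℕ} (h : (esTensor E1 E2).le (tagR e) v) : v ∈ tagR '' E2.ev := by
  rcases tensor_lift_cases h with ⟨he, -⟩ | ⟨-, hv⟩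
  exacts [(tagR_notMem_image_tagL e _ he).elim, hv]

lemma minLbl_proj_esTensor (A : P) :
    ((esTensor E1 E2).proj A).minLbl = (E1.proj A).minLbl ∪ (E2.proj A).minLbl := by
  have hL {e} (he : e ∈ E1.ev) := isEmbedding_tagL_esTensor.mem_proj_minEv_iff (A := A) he
    fun _ _ _ => esTensor_le_tagL (E2 := E2)
  have hR {e} (he : e ∈ E2.ev) := isEmbedding_tagR_esTensor.mem_proj_minEv_iff (A := A) he
    fun _ _ _ => esTensor_le_tagR (E1 := E1)
  ext l
  constructor
  · rintro ⟨u, hu, rfl⟩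
    rcases (ES.mem_proj_minEv.1 hu).1 with ⟨e, he, rfl⟩ | ⟨e, he, rfl⟩
    · exact Or.inl ⟨e, (hL he).1 hu, (esTensor_lbl_tagL ..).symm⟩
    · exact Or.inr ⟨e, (hR he).1 hu, (esTensor_lbl_tagR ..).symm⟩
  · rintro (⟨e, he, rfl⟩ | ⟨e, he, rfl⟩)
    · exact ⟨tagL e, (hL (ES.mem_proj_minEv.1 he).1).2 he, esTensor_lbl_tagL ..⟩
    · exact ⟨tagR e, (hR (ES.mem_proj_minEv.1 he).1).2 he, esTensor_lbl_tagR ..⟩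

lemma maxLbl_proj_esTensor (A : P) :
    ((esTensor E1 E2).proj A).maxLbl = (E1.proj A).maxLbl ∪ (E2.proj A).maxLbl := by
  have hL {e} (he : e ∈ E1.ev) := isEmbedding_tagL_esTensor.mem_proj_maxEv_iff (A := A) he
    fun _ _ _ => esTensor_tagL_le (E2 := E2)
  have hR {e} (he : e ∈ E2.ev) := isEmbedding_tagR_esTensor.mem_proj_maxEv_iff (A := A) he
    fun _ _ _ => esTensor_tagR_le (E1 := E1)
  ext l
  constructor
  · rintro ⟨u, hu, rfl⟩
    rcases (ES.mem_proj_maxEv.1 hu).1 with ⟨e, he, rfl⟩ | ⟨e, he, rfl⟩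
    · exact Or.inl ⟨e, (hL he).1 hu, (esTensor_lbl_tagL ..).symm⟩
    · exact Or.inr ⟨e, (hR he).1 hu, (esTensor_lbl_tagR ..).symm⟩
  · rintro (⟨e, he, rfl⟩ | ⟨e, he, rfl⟩)
    · exact ⟨tagL e, (hL (ES.mem_proj_maxEv.1 he).1).2 he, esTensor_lbl_tagL ..⟩
    · exact ⟨tagR e, (hR (ES.mem_proj_maxEv.1 he).1).2 he, esTensor_lbl_tagR ..⟩

lemma config_esTensor {x y : Set ℕ} (hx : E1.Config x) (hy : E2.Config y) :
    (esTensor E1 E2).Config (tagL '' x ∪ tagR '' y) := by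
  refine (isEmbedding_tagL_esTensor.config_image (fun _ _ _ _ => esTensor_le_tagL) hx).union
    (isEmbedding_tagR_esTensor.config_image (fun _ _ _ _ => esTensor_le_tagR) hy) ?_
  rintro _ ⟨e, -, rfl⟩ _ ⟨f, -, rfl⟩
  constructor <;> intro hc
  · rcases tensor_lift_cases hc with ⟨-, h⟩ | ⟨h, -⟩
    exacts [tagR_notMem_image_tagL _ _ h, tagL_notMem_image_tagR _ _ h]
  · rcases tensor_lift_cases hc with ⟨h, -⟩ | ⟨-, h⟩
    exacts [tagR_notMem_image_tagL _ _ h, tagL_notMem_image_tagR _ _ h]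

lemma eq_union_of_mem_maxC_esTensor (h1 : E1.ev.Finite) (h2 : E2.ev.Finite) {z : Set ℕ}
    (hz : z ∈ (esTensor E1 E2).MaxC) :
    ∃ x ∈ E1.MaxC, ∃ y ∈ E2.MaxC, z = tagL '' x ∪ tagR '' y := by
  obtain ⟨x, hx, hzx⟩ :=
    ES.exists_maxC_superset h1 (isEmbedding_tagL_esTensor.config_preimage hz.1)
  obtain ⟨y, hy, hzy⟩ :=
    ES.exists_maxC_superset h2 (isEmbedding_tagR_esTensor.config_preimage hz.1)
  refine ⟨x, hx, y, hy, (hz.2 _ (config_esTensor hx.1 hy.1) ?_).symm⟩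
  intro u hu
  rcases hz.1.1 hu with ⟨e, he, rfl⟩ | ⟨f, hf, rfl⟩
  exacts [Or.inl ⟨e, hzx ⟨he, hu⟩, rfl⟩, Or.inr ⟨f, hzy ⟨hf, hu⟩, rfl⟩]

end Tensor

section Sum

variable {E1 E2 : ES P M}

lemma isEmbedding_tagL_esSum : ES.IsEmbedding tagL E1 (esSum E1 E2) :=
  { isEmbedding_tagL_esTensor with
    conf_iff := fun e he f hf => by simp [esSum, esTensor, he, hf] }

lemma isEmbedding_tagR_esSum : ES.IsEmbedding tagR E2 (esSum E1 E2) :=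
  { isEmbedding_tagR_esTensor with
    conf_iff := fun e he f hf => by simp [esSum, esTensor, he, hf] }

lemma esSum_conf_tagL_tagR {e f : ℕ} (he : e ∈ E1.ev) (hf : f ∈ E2.ev) :
    (esSum E1 E2).conf (tagL e) (tagR f) :=
  Or.inr ⟨e, he, f, hf, Or.inl ⟨rfl, rfl⟩⟩

lemma eq_image_of_mem_maxC_esSum (h1 : E1.ev.Finite) (h2 : E2.ev.Finite) {z : Set ℕ}
    (hz : z ∈ (esSum E1 E2).MaxC) :
    (∃ x ∈ E1.MaxC, z = tagL '' x) ∨ (∃ y ∈ E2.MaxC, z = tagR '' y) := by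
  by_cases hR : ∃ f ∈ E2.ev, tagR f ∈ z
  · obtain ⟨f₀, hf₀, hf₀z⟩ := hR
    obtain ⟨y, hy, hzy⟩ :=
      ES.exists_maxC_superset h2 (isEmbedding_tagR_esSum.config_preimage hz.1)
    refine Or.inr ⟨y, hy, (hz.2 _ (isEmbedding_tagR_esSum.config_image
      (fun _ _ _ _ => esTensor_le_tagR) hy.1) fun u hu => ?_).symm⟩
    rcases hz.1.1 hu with ⟨e, he, rfl⟩ | ⟨f, hf, rfl⟩
    · exact (hz.1.2.2 _ hu _ hf₀z (esSum_conf_tagL_tagR he hf₀)).elim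
    · exact ⟨f, hzy ⟨hf, hu⟩, rfl⟩
  · obtain ⟨x, hx, hzx⟩ :=
      ES.exists_maxC_superset h1 (isEmbedding_tagL_esSum.config_preimage hz.1)
    refine Or.inl ⟨x, hx, (hz.2 _ (isEmbedding_tagL_esSum.config_image
      (fun _ _ _ _ => esTensor_le_tagL) hx.1) fun u hu => ?_).symm⟩
    rcases hz.1.1 hu with ⟨e, he, rfl⟩ | ⟨f, hf, rfl⟩
    · exact ⟨e, hzx ⟨he, hu⟩, rfl⟩
    · exact (hR ⟨f, hf, hu⟩).elim

end Sum

section Seq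

variable {E1 E2 : ES P M}

lemma isEmbedding_tagL_esSeq : ES.IsEmbedding tagL E1 (esSeq E1 E2) where
  injective := tagL_injective
  mapsTo _ he := Or.inl ⟨_, he, rfl⟩
  lbl_apply := esSeq_lbl_tagL E1 E2
  le_iff e he f hf := by simp [esSeq, he, hf]
  conf_iff e he f hf := by simp [esSeq, he, hf]

lemma esSeq_le_tagL {e v : ℕ} (h : (esSeq E1 E2).le v (tagL e)) : v ∈ tagL '' E1.ev := by
  simp [esSeq] at h
  obtain ⟨e', he', -, -, rfl⟩ := h
  exact ⟨e', he', rfl⟩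

lemma esSeq_tagC_le {k f v : ℕ} (h : (esSeq E1 E2).le (tagC k f) v) :
    v ∈ tagC k '' E2.ev := by
  simp [esSeq] at h
  obtain ⟨x, -, -, f', hf', -, rfl, rfl⟩ := h
  exact ⟨f', hf', rfl⟩

lemma esSeq_le_tagC {k f v : ℕ} (h : (esSeq E1 E2).le v (tagC k f)) :
    v ∈ tagC k '' E2.ev ∨ ∃ x ∈ E1.MaxC, k = encSet x ∧ ∃ e ∈ x, v = tagL e := by
  simp [esSeq] at h
  rcases h with ⟨x, -, e, he, -, -, rfl, rfl⟩ | ⟨x, hx, e, he, -, -, rfl, rfl⟩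
  exacts [Or.inl ⟨e, he, rfl⟩, Or.inr ⟨x, hx, rfl, e, he, rfl⟩]

lemma esSeq_conf_tagL_tagC {e k f : ℕ}
    (h : (esSeq E1 E2).conf (tagL e) (tagC k f) ∨ (esSeq E1 E2).conf (tagC k f) (tagL e)) :
    ∃ x ∈ E1.MaxC, k = encSet x ∧ ∃ e' ∈ x, E1.conf e e' := by
  simp [esSeq] at h
  obtain ⟨x, hx, -, hc, -, rfl⟩ := h
  exact ⟨x, hx, rfl, hc⟩

lemma encSet_injOn_maxC (h1 : E1.ev.Finite) : Set.InjOn encSet E1.MaxC :=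
  encSet_injOn.mono fun _ hx => h1.subset hx.1.1

lemma isEmbedding_tagC_esSeq (h1 : E1.ev.Finite) {x : Set ℕ} (hx : x ∈ E1.MaxC) :
    ES.IsEmbedding (tagC (encSet x)) E2 (esSeq E1 E2) where
  injective _ _ h := (tagC_inj.1 h).2
  mapsTo f hf := Or.inr ⟨x, hx, f, hf, rfl⟩
  lbl_apply := esSeq_lbl_tagC E1 E2 _
  le_iff e he f hf := by
    simp [esSeq, he, hf]
    exact ⟨fun ⟨_, _, h, _⟩ => h, fun h => ⟨x, hx, h, rfl⟩⟩
  conf_iff e he f hf := by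
    simp [esSeq, he, hf]
    refine ⟨?_, fun h => Or.inl ⟨x, hx, h, rfl⟩⟩
    rintro (⟨_, _, h, _⟩ | ⟨x₁, hx₁, x₂, hx₂, hne, h₁, h₂⟩)
    exacts [h, (hne (encSet_injOn_maxC h1 hx₁ hx₂ (h₁.symm.trans h₂))).elim]

lemma config_esSeq (h1 : E1.ev.Finite) {x y : Set ℕ} (hx : x ∈ E1.MaxC) (hy : E2.Config y) :
    (esSeq E1 E2).Config (tagL '' x ∪ tagC (encSet x) '' y) := by
  have hC := isEmbedding_tagC_esSeq (E2 := E2) h1 hx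
  have hLx := (isEmbedding_tagL_esSeq (E2 := E2)).config_image (fun _ _ _ _ => esSeq_le_tagL) hx.1
  have hmixed {e f} (he : e ∈ x) (hc : (esSeq E1 E2).conf (tagL e) (tagC (encSet x) f) ∨
      (esSeq E1 E2).conf (tagC (encSet x) f) (tagL e)) : False := by
    obtain ⟨x', hx', hk, e', he', hc⟩ := esSeq_conf_tagL_tagC hc
    rw [← encSet_injOn_maxC h1 hx hx' hk] at he'
    exact hx.1.2.2 e he e' he' hc
  refine ⟨Set.union_subset hLx.1 ((Set.image_mono hy.1).trans hC.mapsTo.image_subset), ?_, ?_⟩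
  · rintro _ (hu | ⟨f, hf, rfl⟩) v hv hle
    · exact Or.inl (hLx.2.1 _ hu v hv hle)
    rcases esSeq_le_tagC hle with ⟨f', hf', rfl⟩ | ⟨x', hx', hk, e, he, rfl⟩
    · exact Or.inr ⟨f', hy.2.1 f hf f' hf' ((hC.le_iff f' hf' f (hy.1 hf)).1 hle), rfl⟩
    · rw [← encSet_injOn_maxC h1 hx hx' hk] at he
      exact Or.inl ⟨e, he, rfl⟩
  · rintro _ (⟨e, he, rfl⟩ | ⟨f, hf, rfl⟩) _ (⟨e', he', rfl⟩ | ⟨f', hf', rfl⟩) hc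
    · exact hLx.2.2 _ ⟨e, he, rfl⟩ _ ⟨e', he', rfl⟩ hc
    · exact hmixed he (Or.inl hc)
    · exact hmixed he' (Or.inr hc)
    · exact hy.2.2 f hf f' hf' ((hC.conf_iff f (hy.1 hf) f' (hy.1 hf')).1 hc)

lemma exists_maxC_of_config_esSeq (h1 : E1.ev.Finite) (hsymm : ∀ e f, E1.conf e f → E1.conf f e)
    {z : Set ℕ} (hz : (esSeq E1 E2).Config z) :
    ∃ x ∈ E1.MaxC, {e ∈ E1.ev | tagL e ∈ z} ⊆ x ∧ ∀ k f, tagC k f ∈ z → k = encSet x := by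
  have hz₀ := (isEmbedding_tagL_esSeq (E2 := E2)).config_preimage hz
  by_cases hC : ∃ k f, tagC k f ∈ z
  swap
  · push Not at hC
    obtain ⟨x, hx, hsub⟩ := ES.exists_maxC_superset h1 hz₀
    exact ⟨x, hx, hsub, fun k f hf => (hC k f hf).elim⟩
  obtain ⟨k, f₀, hf₀⟩ := hC
  obtain ⟨x, hx, f₀', hf₀', hk⟩ : ∃ x ∈ E1.MaxC, ∃ f ∈ E2.ev, tagC k f₀ = tagC (encSet x) f := by
    rcases hz.1 hf₀ with ⟨e, -, h⟩ | h
    exacts [(tagL_ne_tagC _ _ _ h).elim, h]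
  obtain ⟨rfl, rfl⟩ := tagC_inj.1 hk
  refine ⟨x, hx, ?_, fun k f hf => ?_⟩
  · -- an event of `x` in conflict with the left part of `z` would conflict with `tagC _ f₀ ∈ z`
    have hcross : ∀ e ∈ {e ∈ E1.ev | tagL e ∈ z}, ∀ e' ∈ x, ¬ E1.conf e e' ∧ ¬ E1.conf e' e := by
      intro e he e' he'
      have hc : ¬ E1.conf e e' := fun hc => hz.2.2 _ he.2 _ hf₀
        (Or.inr (Or.inr (Or.inr ⟨x, hx, e, he.1, ⟨e', he', hc⟩, f₀, hf₀', Or.inl ⟨rfl, rfl⟩⟩)))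
      exact ⟨hc, fun hc' => hc (hsymm _ _ hc')⟩
    rw [← hx.2 _ (hz₀.union hx.1 hcross) Set.subset_union_right]
    exact Set.subset_union_left
  · rcases hz.1 hf with ⟨e, -, h⟩ | ⟨x', hx', f', hf', h⟩
    · exact (tagL_ne_tagC _ _ _ h).elim
    obtain ⟨rfl, rfl⟩ := tagC_inj.1 h
    by_contra hne
    exact hz.2.2 _ hf _ hf₀ (Or.inr (Or.inr (Or.inl
      ⟨x', hx', x, hx, fun h => hne (h ▸ rfl), f, hf', f₀, hf₀', rfl, rfl⟩)))

lemma eq_union_of_mem_maxC_esSeq (h1 : E1.ev.Finite) (h2 : E2.ev.Finite)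
    (hsymm : ∀ e f, E1.conf e f → E1.conf f e) {z : Set ℕ} (hz : z ∈ (esSeq E1 E2).MaxC) :
    ∃ x ∈ E1.MaxC, ∃ y ∈ E2.MaxC, z = tagL '' x ∪ tagC (encSet x) '' y := by
  obtain ⟨x, hx, hzx, hk⟩ := exists_maxC_of_config_esSeq h1 hsymm hz.1
  obtain ⟨y, hy, hzy⟩ :=
    ES.exists_maxC_superset h2 ((isEmbedding_tagC_esSeq h1 hx).config_preimage hz.1)
  refine ⟨x, hx, y, hy, (hz.2 _ (config_esSeq h1 hx hy.1) fun u hu => ?_).symm⟩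
  rcases hz.1.1 hu with ⟨e, he, rfl⟩ | ⟨x', -, f, hf, rfl⟩
  · exact Or.inl ⟨e, hzx ⟨he, hu⟩, rfl⟩
  · obtain hx' := hk _ _ hu
    rw [hx'] at hu ⊢
    exact Or.inr ⟨f, hzy ⟨hf, hu⟩, rfl⟩

lemma minLbl_proj_esSeq (h1 : E1.ev.Finite) {Γ1 : Set P}
    (hsbj : ∀ e ∈ E1.ev, (E1.lbl e).sbj ∈ Γ1)
    (hcover : ∀ x ∈ E1.MaxC, ∀ A ∈ Γ1, ∃ e ∈ x, (E1.lbl e).sbj = A) (A : P) :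
    ((esSeq E1 E2).proj A).minLbl = (E1.proj A).minLbl ∪ lminus (E2.proj A).minLbl Γ1 := by
  have hL {e} (he : e ∈ E1.ev) := (isEmbedding_tagL_esSeq (E2 := E2)).mem_proj_minEv_iff
    (A := A) he fun _ _ _ => esSeq_le_tagL
  have hC {x f} (hx : x ∈ E1.MaxC) (hf : f ∈ E2.ev) (hA : A ∉ Γ1) :=
    (isEmbedding_tagC_esSeq h1 hx).mem_proj_minEv_iff (A := A) hf fun v _ hvs hle => by
      rcases esSeq_le_tagC hle with h | ⟨x', hx', -, e, he, rfl⟩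
      · exact h
      · rw [esSeq_lbl_tagL] at hvs
        exact (hA (hvs ▸ hsbj e (hx'.1.1 he))).elim
  ext l
  constructor
  · rintro ⟨u, hu, rfl⟩
    obtain ⟨huev, hus, hmin⟩ := ES.mem_proj_minEv.1 hu
    rcases huev with ⟨e, he, rfl⟩ | ⟨x, hx, f, hf, rfl⟩
    · exact Or.inl ⟨e, (hL he).1 hu, (esSeq_lbl_tagL ..).symm⟩
    rw [esSeq_lbl_tagC] at hus
    have hA : A ∉ Γ1 := fun hA => by
      obtain ⟨e, he, hes⟩ := hcover x hx A hA
      exact tagL_ne_tagC _ _ _ (hmin _ (Or.inl ⟨e, hx.1.1 he, rfl⟩) (by rwa [esSeq_lbl_tagL])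
        (Or.inr (Or.inr ⟨x, hx, e, he, f, hf, hes.trans hus.symm, rfl, rfl⟩)))
    exact Or.inr ⟨⟨f, (hC hx hf hA).1 hu, (esSeq_lbl_tagC ..).symm⟩, by
      rw [ES.proj, esSeq_lbl_tagC, hus]; exact hA⟩
  · rintro (⟨e, he, rfl⟩ | ⟨⟨f, hf, rfl⟩, hA⟩)
    · exact ⟨tagL e, (hL (ES.mem_proj_minEv.1 he).1).2 he, esSeq_lbl_tagL ..⟩
    obtain ⟨hf₂, hfs, -⟩ := ES.mem_proj_minEv.1 hf
    obtain ⟨x, hx⟩ := ES.maxC_nonempty h1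
    exact ⟨tagC (encSet x) f, (hC hx hf₂ (hfs ▸ hA)).2 hf, esSeq_lbl_tagC ..⟩

lemma maxLbl_proj_esSeq (h1 : E1.ev.Finite) {Γ2 : Set P}
    (hsbj : ∀ f ∈ E2.ev, (E2.lbl f).sbj ∈ Γ2)
    (hsurj : ∀ A ∈ Γ2, ∃ f ∈ E2.ev, (E2.lbl f).sbj = A)
    (hmem : ∀ e ∈ E1.ev, ∃ x ∈ E1.MaxC, e ∈ x) (A : P) :
    ((esSeq E1 E2).proj A).maxLbl = (E2.proj A).maxLbl ∪ lminus (E1.proj A).maxLbl Γ2 := by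
  have hC {x f} (hx : x ∈ E1.MaxC) (hf : f ∈ E2.ev) :=
    (isEmbedding_tagC_esSeq h1 hx).mem_proj_maxEv_iff (A := A) hf fun _ _ _ => esSeq_tagC_le
  have hL {e} (he : e ∈ E1.ev) (hA : A ∉ Γ2) :=
    (isEmbedding_tagL_esSeq (E2 := E2)).mem_proj_maxEv_iff (A := A) he fun v hv hvs _ => by
      rcases hv with hv | ⟨x, -, f, hf, rfl⟩
      · exact hv
      · rw [esSeq_lbl_tagC] at hvs
        exact (hA (hvs ▸ hsbj f hf)).elim
  ext l
  constructor
  · rintro ⟨u, hu, rfl⟩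
    obtain ⟨huev, hus, hmax⟩ := ES.mem_proj_maxEv.1 hu
    rcases huev with ⟨e, he, rfl⟩ | ⟨x, hx, f, hf, rfl⟩
    swap
    · exact Or.inl ⟨f, (hC hx hf).1 hu, (esSeq_lbl_tagC ..).symm⟩
    rw [esSeq_lbl_tagL] at hus
    have hA : A ∉ Γ2 := fun hA => by
      obtain ⟨f, hf, hfs⟩ := hsurj A hA
      obtain ⟨x, hx, hex⟩ := hmem e he
      exact tagC_ne_tagL _ _ _ (hmax _ (Or.inr ⟨x, hx, f, hf, rfl⟩) (by rwa [esSeq_lbl_tagC])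
        (Or.inr (Or.inr ⟨x, hx, e, hex, f, hf, hus.trans hfs.symm, rfl, rfl⟩)))
    exact Or.inr ⟨⟨e, (hL he hA).1 hu, (esSeq_lbl_tagL ..).symm⟩, by
      rw [ES.proj, esSeq_lbl_tagL, hus]; exact hA⟩
  · rintro (⟨f, hf, rfl⟩ | ⟨⟨e, he, rfl⟩, hA⟩)
    · obtain ⟨x, hx⟩ := ES.maxC_nonempty h1
      exact ⟨tagC (encSet x) f, (hC hx (ES.mem_proj_maxEv.1 hf).1).2 hf, esSeq_lbl_tagC ..⟩
    obtain ⟨he₁, hes, -⟩ := ES.mem_proj_maxEv.1 he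
    exact ⟨tagL e, (hL he₁ (hes ▸ hA)).2 he, esSeq_lbl_tagL ..⟩

end Seq

structure Realizes (Γ : Set P) (φ Λ : Set (Label P M)) (E : ES P M) : Prop where
  finite : E.ev.Finite
  conf_symm : ∀ e f, E.conf e f → E.conf f e
  sbj_mem : ∀ e ∈ E.ev, (E.lbl e).sbj ∈ Γ
  maxC_cover : ∀ x ∈ E.MaxC, ∀ A ∈ Γ, ∃ e ∈ x, (E.lbl e).sbj = A
  exists_maxC : ∀ e ∈ E.ev, ∃ x ∈ E.MaxC, e ∈ x
  minLbl_proj : ∀ A, (E.proj A).minLbl = hat φ A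
  maxLbl_proj : ∀ A, (E.proj A).maxLbl = hat Λ A

namespace Realizes

variable {Γ : Set P} {φ Λ : Set (Label P M)} {E : ES P M}

lemma exists_sbj_eq (g : Realizes Γ φ Λ E) {A : P} (hA : A ∈ Γ) :
    ∃ e ∈ E.ev, (E.lbl e).sbj = A :=
  let ⟨x, hx⟩ := ES.maxC_nonempty g.finite
  let ⟨e, he, hes⟩ := g.maxC_cover x hx A hA
  ⟨e, hx.1.1 he, hes⟩

lemma hat_eq_empty (g : Realizes Γ φ Λ E) {A : P} (hA : A ∉ Γ) : hat φ A = ∅ := by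
  rw [← g.minLbl_proj]
  refine Set.eq_empty_of_forall_notMem ?_
  rintro _ ⟨u, hu, -⟩
  obtain ⟨hu, hus, -⟩ := ES.mem_proj_minEv.1 hu
  exact hA (hus ▸ g.sbj_mem u hu)

end Realizes

lemma realizes_esEmpty [Nonempty P] [Nonempty M] : Realizes ∅ ∅ ∅ (esEmpty : ES P M) where
  finite := Set.finite_empty
  conf_symm _ _ h := h
  sbj_mem _ h := h.elim
  maxC_cover _ _ _ h := h.elim
  exists_maxC _ h := h.elim
  minLbl_proj _ := by simp [ES.minLbl, ES.minEv, ES.minIn, ES.proj, esEmpty, hat]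
  maxLbl_proj _ := by simp [ES.maxLbl, ES.maxEv, ES.maxIn, ES.proj, esEmpty, hat]

lemma lblSet_esAct (a b : P) (m : M) :
    (esAct a b m).lblSet = {Label.out a b m, Label.inp a b m} := by
  simp [ES.lblSet, esAct, Set.image_insert_eq]

lemma realizes_esAct {a b : P} (m : M) (hab : a ≠ b) :
    Realizes {a, b} {Label.out a b m, Label.inp a b m} {Label.out a b m, Label.inp a b m}
      (esAct a b m) := by
  have hinj : Set.InjOn (fun e => ((esAct a b m).lbl e).sbj) (esAct a b m).ev := by
    rintro _ (rfl | rfl) _ (rfl | rfl) h <;> simp_all [esAct, Label.sbj]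
  have hcfg : (esAct a b m).Config {0, 1} := ⟨subset_rfl, fun _ _ _ hf _ => hf, fun _ _ _ _ h => h⟩
  have hmaxC : {0, 1} ∈ (esAct a b m).MaxC := ⟨hcfg, fun _ hy h => hy.1.antisymm h⟩
  refine ⟨(Set.finite_singleton 1).insert 0, fun _ _ h => h, ?_, ?_, fun _ he => ⟨_, hmaxC, he⟩,
    fun A => ?_, fun A => ?_⟩
  · rintro _ (rfl | rfl) <;> simp [esAct, Label.sbj]
  · rintro x hx _ (rfl | rfl)
    all_goals rw [← hx.2 _ hcfg hx.1.1]
    exacts [⟨0, Or.inl rfl, rfl⟩, ⟨1, Or.inr rfl, rfl⟩]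
  · rw [ES.minLbl, ES.minEv_proj_eq_ev hinj, ← lblSet_esAct]
    exact ES.lblSet_proj A
  · rw [ES.maxLbl, ES.maxEv_proj_eq_ev hinj, ← lblSet_esAct]
    exact ES.lblSet_proj A

section Compose

variable {E1 E2 : ES P M} {φ1 φ2 Λ1 Λ2 : Set (Label P M)}

lemma realizes_esTensor {Γ1 Γ2 : Set P} (g1 : Realizes Γ1 φ1 Λ1 E1) (g2 : Realizes Γ2 φ2 Λ2 E2) :
    Realizes (Γ1 ∪ Γ2) (φ1 ∪ φ2) (Λ1 ∪ Λ2) (esTensor E1 E2) := by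
  have hfin : (esTensor E1 E2).ev.Finite := (g1.finite.image tagL).union (g2.finite.image tagR)
  refine ⟨hfin, ?_, ?_, ?_, ?_, fun A => ?_, fun A => ?_⟩
  · rintro _ _ (⟨e, he, f, hf, hc, rfl, rfl⟩ | ⟨e, he, f, hf, hc, rfl, rfl⟩)
    exacts [Or.inl ⟨f, hf, e, he, g1.conf_symm _ _ hc, rfl, rfl⟩,
      Or.inr ⟨f, hf, e, he, g2.conf_symm _ _ hc, rfl, rfl⟩]
  · rintro _ (⟨e, he, rfl⟩ | ⟨e, he, rfl⟩)
    exacts [by simpa using Or.inl (g1.sbj_mem e he), by simpa using Or.inr (g2.sbj_mem e he)]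
  · intro z hz A hA
    obtain ⟨x, hx, y, hy, rfl⟩ := eq_union_of_mem_maxC_esTensor g1.finite g2.finite hz
    rcases hA with hA | hA
    · obtain ⟨e, he, hes⟩ := g1.maxC_cover x hx A hA
      exact ⟨tagL e, Or.inl ⟨e, he, rfl⟩, by simpa⟩
    · obtain ⟨e, he, hes⟩ := g2.maxC_cover y hy A hA
      exact ⟨tagR e, Or.inr ⟨e, he, rfl⟩, by simpa⟩
  · rintro _ (⟨e, he, rfl⟩ | ⟨e, he, rfl⟩)
    · obtain ⟨x, hx, hex⟩ := g1.exists_maxC e he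
      obtain ⟨z, hz, hsub⟩ :=
        ES.exists_maxC_superset hfin (config_esTensor hx.1 (ES.config_empty (E := E2)))
      exact ⟨z, hz, hsub (Or.inl ⟨e, hex, rfl⟩)⟩
    · obtain ⟨y, hy, hey⟩ := g2.exists_maxC e he
      obtain ⟨z, hz, hsub⟩ :=
        ES.exists_maxC_superset hfin (config_esTensor (ES.config_empty (E := E1)) hy.1)
      exact ⟨z, hz, hsub (Or.inr ⟨e, hey, rfl⟩)⟩
  · rw [minLbl_proj_esTensor, g1.minLbl_proj, g2.minLbl_proj, hat_union]
  · rw [maxLbl_proj_esTensor, g1.maxLbl_proj, g2.maxLbl_proj, hat_union]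

lemma realizes_esSum {Γ : Set P} (g1 : Realizes Γ φ1 Λ1 E1) (g2 : Realizes Γ φ2 Λ2 E2) :
    Realizes Γ (φ1 ∪ φ2) (Λ1 ∪ Λ2) (esSum E1 E2) := by
  have gT := realizes_esTensor g1 g2
  rw [Set.union_self] at gT
  refine ⟨gT.finite, ?_, gT.sbj_mem, ?_, ?_, gT.minLbl_proj, gT.maxLbl_proj⟩
  · rintro _ _ ((⟨e, he, f, hf, hc, rfl, rfl⟩ | ⟨e, he, f, hf, hc, rfl, rfl⟩) |
      ⟨e, he, f, hf, ⟨rfl, rfl⟩ | ⟨rfl, rfl⟩⟩)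
    exacts [Or.inl (Or.inl ⟨f, hf, e, he, g1.conf_symm _ _ hc, rfl, rfl⟩),
      Or.inl (Or.inr ⟨f, hf, e, he, g2.conf_symm _ _ hc, rfl, rfl⟩),
      Or.inr ⟨e, he, f, hf, Or.inr ⟨rfl, rfl⟩⟩, Or.inr ⟨e, he, f, hf, Or.inl ⟨rfl, rfl⟩⟩]
  · intro z hz A hA
    rcases eq_image_of_mem_maxC_esSum g1.finite g2.finite hz with ⟨x, hx, rfl⟩ | ⟨y, hy, rfl⟩
    · obtain ⟨e, he, hes⟩ := g1.maxC_cover x hx A hA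
      exact ⟨tagL e, ⟨e, he, rfl⟩, by simpa [esSum]⟩
    · obtain ⟨e, he, hes⟩ := g2.maxC_cover y hy A hA
      exact ⟨tagR e, ⟨e, he, rfl⟩, by simpa [esSum]⟩
  · rintro _ (⟨e, he, rfl⟩ | ⟨e, he, rfl⟩)
    · obtain ⟨x, hx, hex⟩ := g1.exists_maxC e he
      obtain ⟨z, hz, hsub⟩ := ES.exists_maxC_superset (E := esSum E1 E2) gT.finite
        (isEmbedding_tagL_esSum.config_image (fun _ _ _ _ => esTensor_le_tagL) hx.1)
      exact ⟨z, hz, hsub ⟨e, hex, rfl⟩⟩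
    · obtain ⟨y, hy, hey⟩ := g2.exists_maxC e he
      obtain ⟨z, hz, hsub⟩ := ES.exists_maxC_superset (E := esSum E1 E2) gT.finite
        (isEmbedding_tagR_esSum.config_image (fun _ _ _ _ => esTensor_le_tagR) hy.1)
      exact ⟨z, hz, hsub ⟨e, hey, rfl⟩⟩

lemma realizes_esSeq {Γ1 Γ2 : Set P} (g1 : Realizes Γ1 φ1 Λ1 E1) (g2 : Realizes Γ2 φ2 Λ2 E2) :
    Realizes (Γ1 ∪ Γ2) (φ1 ∪ lminus φ2 Γ1) (Λ2 ∪ lminus Λ1 Γ2) (esSeq E1 E2) := by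
  have hfin : (esSeq E1 E2).ev.Finite := by
    refine ((g1.finite.image tagL).union
      ((ES.maxC_finite g1.finite).image2 (fun x f => tagC (encSet x) f) g2.finite)).subset ?_
    rintro _ (h | ⟨x, hx, f, hf, rfl⟩)
    exacts [Or.inl h, Or.inr (Set.mem_image2_of_mem hx hf)]
  refine ⟨hfin, ?_, ?_, ?_, ?_, fun A => ?_, fun A => ?_⟩
  · rintro _ _ (⟨e, he, f, hf, hc, rfl, rfl⟩ | ⟨x, hx, e, he, f, hf, hc, rfl, rfl⟩ |
      ⟨x, hx, x', hx', hne, e, he, f, hf, rfl, rfl⟩ | ⟨x, hx, e, he, hce, f, hf, h⟩)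
    exacts [Or.inl ⟨f, hf, e, he, g1.conf_symm _ _ hc, rfl, rfl⟩,
      Or.inr (Or.inl ⟨x, hx, f, hf, e, he, g2.conf_symm _ _ hc, rfl, rfl⟩),
      Or.inr (Or.inr (Or.inl ⟨x', hx', x, hx, Ne.symm hne, f, hf, e, he, rfl, rfl⟩)),
      Or.inr (Or.inr (Or.inr ⟨x, hx, e, he, hce, f, hf, h.symm.imp And.symm And.symm⟩))]
  · rintro _ (⟨e, he, rfl⟩ | ⟨x, -, f, hf, rfl⟩)
    exacts [by simpa using Or.inl (g1.sbj_mem e he), by simpa using Or.inr (g2.sbj_mem f hf)]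
  · intro z hz A hA
    obtain ⟨x, hx, y, hy, rfl⟩ := eq_union_of_mem_maxC_esSeq g1.finite g2.finite g1.conf_symm hz
    rcases hA with hA | hA
    · obtain ⟨e, he, hes⟩ := g1.maxC_cover x hx A hA
      exact ⟨tagL e, Or.inl ⟨e, he, rfl⟩, by simpa⟩
    · obtain ⟨f, hf, hfs⟩ := g2.maxC_cover y hy A hA
      exact ⟨tagC (encSet x) f, Or.inr ⟨f, hf, rfl⟩, by simpa⟩
  · rintro _ (⟨e, he, rfl⟩ | ⟨x, hx, f, hf, rfl⟩)
    · obtain ⟨x, hx, hex⟩ := g1.exists_maxC e he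
      obtain ⟨z, hz, hsub⟩ := ES.exists_maxC_superset hfin
        (config_esSeq (E2 := E2) g1.finite hx ES.config_empty)
      exact ⟨z, hz, hsub (Or.inl ⟨e, hex, rfl⟩)⟩
    · obtain ⟨y, hy, hfy⟩ := g2.exists_maxC f hf
      obtain ⟨z, hz, hsub⟩ := ES.exists_maxC_superset hfin (config_esSeq g1.finite hx hy.1)
      exact ⟨z, hz, hsub (Or.inr ⟨f, hfy, rfl⟩)⟩
  · rw [minLbl_proj_esSeq g1.finite g1.sbj_mem g1.maxC_cover, g1.minLbl_proj, g2.minLbl_proj,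
      hat_union, hat_lminus]
  · rw [maxLbl_proj_esSeq g1.finite g2.sbj_mem (fun _ => g2.exists_sbj_eq) g1.exists_maxC,
      g1.maxLbl_proj, g2.maxLbl_proj, hat_union, hat_lminus]

end Compose

section Typing

variable {E1 E2 : ES P M} {φ1 φ2 Λ1 Λ2 : Set (Label P M)}

lemma disjoint_lblSet {Γ1 Γ2 : Set P} (g1 : Realizes Γ1 φ1 Λ1 E1) (g2 : Realizes Γ2 φ2 Λ2 E2)
    (hd : Γ1 ∩ Γ2 = ∅) : Disjoint E1.lblSet E2.lblSet := by
  rw [Set.disjoint_left]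
  rintro _ ⟨e, he, rfl⟩ ⟨f, hf, hfe⟩
  exact hd.subset ⟨g1.sbj_mem e he, hfe ▸ g2.sbj_mem f hf⟩

lemma wb_of_compch {Γ : Set P} (g1 : Realizes Γ φ1 Λ1 E1) (g2 : Realizes Γ φ2 Λ2 E2)
    (h : compch φ1 φ2 Γ) : wb E1 E2 := by
  have h1 : minLblP E1 = hat φ1 := funext g1.minLbl_proj
  have h2 : minLblP E2 = hat φ2 := funext g2.minLbl_proj
  obtain ⟨A, -, ⟨hout, hne1, hne2⟩, huniq, hpass⟩ := h
  simp only [wb, active, passive, h1, h2]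
  refine ⟨A, ⟨hne1, hne2, hout⟩, fun A' ⟨hne1', hne2', hout'⟩ => ?_, fun B hB => ?_⟩
  · by_cases hA' : A' ∈ Γ
    · exact huniq A' hA' ⟨hout', hne1', hne2'⟩
    · exact (hne1' (g1.hat_eq_empty hA')).elim
  · by_cases hBΓ : B ∈ Γ
    · obtain ⟨⟨hd, hin⟩, hiff⟩ := hpass B hBΓ hB
      exact ⟨hd, hin, hiff⟩
    · simp [g1.hat_eq_empty hBΓ, g2.hat_eq_empty hBΓ]

variable [Nonempty P] [Nonempty M]

lemma gsem_par {G1 G2 : GC P M} (hG1 : gsem G1 = some E1) (hG2 : gsem G2 = some E2)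
    (hd : Disjoint E1.lblSet E2.lblSet) : gsem (GC.par G1 G2) = some (esTensor E1 E2) := by
  simp [gsem, hG1, hG2, hd]

lemma exists_gsem_of_typing {Γ : Set P} {G : GC P M} {φ Λ : Set (Label P M)}
    (h : Typing Γ G φ Λ) : ∃ E, gsem G = some E ∧ Realizes Γ φ Λ E := by
  induction h with
  | temp => exact ⟨esEmpty, rfl, realizes_esEmpty⟩
  | tint hab => exact ⟨_, by simp [gsem, hab], realizes_esAct _ hab⟩
  | tseq _ _ ih1 ih2 =>
    obtain ⟨E1, hG1, g1⟩ := ih1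
    obtain ⟨E2, hG2, g2⟩ := ih2
    exact ⟨_, by simp [gsem, hG1, hG2], realizes_esSeq g1 g2⟩
  | tpar _ _ hd ih1 ih2 =>
    obtain ⟨E1, hG1, g1⟩ := ih1
    obtain ⟨E2, hG2, g2⟩ := ih2
    exact ⟨_, gsem_par hG1 hG2 (disjoint_lblSet g1 g2 hd), realizes_esTensor g1 g2⟩
  | tch _ _ hc ih1 ih2 =>
    obtain ⟨E1, hG1, g1⟩ := ih1
    obtain ⟨E2, hG2, g2⟩ := ih2
    exact ⟨_, by simp [gsem, hG1, hG2, wb_of_compch g1 g2 hc], realizes_esSum g1 g2⟩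

end Typing

/-- Parallel composition of typable g-choreographies with disjoint participants is
defined: the label sets of `⟦G1⟧` and `⟦G2⟧` are disjoint, so `⟦G1|G2⟧ = ⟦G1⟧⊗⟦G2⟧ ≠ ⊥`;
moreover the minimal (resp. maximal) labels of `⟦G1|G2⟧↾A` are `(φ1∪φ2)̂(A)`
(resp. `(Λ1∪Λ2)̂(A)`) for every participant `A`. -/
theorem par_defined {P M : Type} [Infinite P] [Infinite M]
    {Γ1 Γ2 : Set P} {G1 G2 : GC P M} {φ1 φ2 Λ1 Λ2 : Set (Label P M)}
    (h1 : Typing Γ1 G1 φ1 Λ1) (h2 : Typing Γ2 G2 φ2 Λ2) (hd : Γ1 ∩ Γ2 = ∅) :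
    ∃ E1 E2 : ES P M, gsem G1 = some E1 ∧ gsem G2 = some E2 ∧
      Disjoint E1.lblSet E2.lblSet ∧
      gsem (GC.par G1 G2) = some (esTensor E1 E2) ∧
      ∀ A : P, ((esTensor E1 E2).proj A).minLbl = hat (φ1 ∪ φ2) A ∧
        ((esTensor E1 E2).proj A).maxLbl = hat (Λ1 ∪ Λ2) A := by
  obtain ⟨E1, hG1, g1⟩ := exists_gsem_of_typing h1
  obtain ⟨E2, hG2, g2⟩ := exists_gsem_of_typing h2
  have hdisj := disjoint_lblSet g1 g2 hd
  have g := realizes_esTensor g1 g2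
  exact ⟨E1, E2, hG1, hG2, hdisj, gsem_par hG1 hG2 hdisj,
    fun A => ⟨g.minLbl_proj A, g.maxLbl_proj A⟩⟩

end Choreo
end

section
/- A choice whose branches have different participant sets is untypable: for pairwise distinct participants B, C, S and messages md, req, done, the ground g-choreography (C→B:md ; B→S:md) + (C→S:req ; S→C:done) is not typable, i.e. there are no Π, φ, Λ such that Π ⊢ (C→B:md ; B→S:md) + (C→S:req ; S→C:done) : ⟨φ,Λ⟩ is derivable. -/
open scoped Classical

namespace Choreo

variable {P M : Type}

/-- In any typing derivation, the participant set is exactly `parts g`. -/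
theorem typing_parts {P M : Type} {Γ : Set P} {g : GC P M} {φ Λ : Set (Label P M)}
    (h : Typing Γ g φ Λ) : Γ = parts g := by
  induction h with
  | temp => rfl
  | tint _ => rfl
  | tseq _ _ ih1 ih2 => simp [parts, ih1, ih2]
  | tpar _ _ _ ih1 ih2 => simp [parts, ih1, ih2]
  | tch _ _ _ ih1 ih2 => simp [parts, ← ih1, ← ih2]

/-- A choice whose branches have different participant sets is untypable:
`(C→B:md ; B→S:md) + (C→S:req ; S→C:done)` admits no typing. -/
theorem different_participants_untypable {P M : Type} [Infinite P] [Infinite M]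
    (B C S : P) (md req done : M)
    (hBC : B ≠ C) (hBS : B ≠ S) (hCS : C ≠ S) :
    ¬ ∃ (Γ : Set P) (φ Λ : Set (Label P M)),
        Typing Γ (GC.cho (GC.seq (GC.act C B md) (GC.act B S md))
                         (GC.seq (GC.act C S req) (GC.act S C done))) φ Λ := by
  rintro ⟨Γ, φ, Λ, h⟩
  cases h with
  | tch h1 h2 _ =>
    have e1 := typing_parts h1
    have e2 := typing_parts h2
    have hB1 : B ∈ Γ := by rw [e1]; simp [parts]
    rw [e2] at hB1
    simp only [parts, Set.mem_union, Set.mem_insert_iff, Set.mem_singleton_iff] at hB1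
    rcases hB1 with (h | h) | (h | h) <;>
      [exact hBC h; exact hBS h; exact hBS h; exact hBC h]
end Choreo
end
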